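/- Let ν : ℝ^m ⊗ ℝ^n → ℝ^{mn} be the vectorization e_i ⊗ e_j ↦ e_{n(i−1)+j} and let X : [0,1] → ℝ^m, Y : [0,1] → ℝ^n be continuously differentiable paths. Then for all 1 ≤ i, j ≤ mn, the signature matrix entry of the vectorized product membrane satisfies S(ν∘(X ⊠ Y))_{i,j} = S(X)_{⌈i/n⌉, ⌈j/n⌉} · S(Y)_{((i−1) mod n)+1, ((j−1) mod n)+1}. -/

import Mathlib

open MeasureTheory

noncomputable section

/-- The ordered simplex `0 ≤ t 0 ≤ t 1 ≤ ⋯ ≤ t (k-1) ≤ 1` in `Fin k → ℝ`. -/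
def orderedSimplex (k : ℕ) : Set (Fin k → ℝ) :=
  {t | Monotone t ∧ ∀ a, t a ∈ Set.Icc (0 : ℝ) 1}

/-- Iterated-integral (path) signature entry for a family of scalar coordinate
functions `f a : ℝ → ℝ`, i.e. `⟨σ(X), e_{i₁}* ⊗ ⋯ ⊗ e_{i_k}*⟩` with `f a = X_{i_a}`. -/
def pathSig {k : ℕ} (f : Fin k → ℝ → ℝ) : ℝ :=
  ∫ t in orderedSimplex k, ∏ a, deriv (f a) (t a)

/-- Mixed second partial derivative `∂²/∂s∂t`. -/
def d12 (f : ℝ → ℝ → ℝ) (s t : ℝ) : ℝ :=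
  deriv (fun t' => deriv (fun s' => f s' t') s) t

/-- id-signature entry for a family of scalar membrane coordinate functions. -/
def memSig {k : ℕ} (f : Fin k → ℝ → ℝ → ℝ) : ℝ :=
  ∫ p in (orderedSimplex k) ×ˢ (orderedSimplex k), ∏ a, d12 (f a) (p.1 a) (p.2 a)

/-! The mixed partial of a product membrane `f(s) g(t)` is `f'(s) g'(t)`, so the integrand of
its signature splits as a function of the `s`-variables times one of the `t`-variables, and
Fubini turns the integral over the product of simplices into the product of the two path
signatures. -/

theorem d12_mul (f g : ℝ → ℝ) (s t : ℝ) :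
    d12 (fun s t => f s * g t) s t = deriv f s * deriv g t := by
  simp only [d12, deriv_mul_const_field, deriv_const_mul_field]

theorem memSig_mul {k : ℕ} (f g : Fin k → ℝ → ℝ) :
    memSig (fun a s t => f a s * g a t) = pathSig f * pathSig g := by
  simp only [memSig, pathSig, d12_mul, Finset.prod_mul_distrib]
  rw [Measure.volume_eq_prod]
  exact setIntegral_prod_mul (fun x : Fin k → ℝ => ∏ a, deriv (f a) (x a))
    (fun y : Fin k → ℝ => ∏ a, deriv (g a) (y a)) _ _

theorem vectorized_product_membrane_signature_general (m n : ℕ)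
    (X : ℝ → Fin m → ℝ) (Y : ℝ → Fin n → ℝ)
    (i j : Fin (m * n)) :
    memSig (fun a s t => X s ((![i, j] a).divNat) * Y t ((![i, j] a).modNat))
      = pathSig (fun a t => X t (![i.divNat, j.divNat] a))
        * pathSig (fun a t => Y t (![i.modNat, j.modNat] a)) := by
  rw [memSig_mul (fun a s => X s ((![i, j] a).divNat)) (fun a t => Y t ((![i, j] a).modNat))]
  congr 2 <;> ext a <;> fin_cases a <;> rfl

/-- with the vectorization `e_i ⊗ e_j ↦ e_{n(i−1)+j}` (0-indexed:
`a ↦ (a / n, a % n)`, via `Fin.divNat` and `Fin.modNat`), the signature matrix of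
the vectorized product membrane `ν ∘ (X ⊠ Y)` satisfies
`S(ν∘(X ⊠ Y))_{i,j} = S(X)_{⌈i/n⌉,⌈j/n⌉} · S(Y)_{((i−1) mod n)+1, ((j−1) mod n)+1}`. -/
theorem vectorized_product_membrane_signature (m n : ℕ)
    (X : ℝ → Fin m → ℝ) (Y : ℝ → Fin n → ℝ)
    (hX : ContDiff ℝ 1 X) (hY : ContDiff ℝ 1 Y)
    (i j : Fin (m * n)) :
    memSig (fun a s t => X s ((![i, j] a).divNat) * Y t ((![i, j] a).modNat))
      = pathSig (fun a t => X t (![i.divNat, j.divNat] a))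
        * pathSig (fun a t => Y t (![i.modNat, j.modNat] a)) :=
  vectorized_product_membrane_signature_general m n X Y i j
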